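/- For the fully decomposed pattern (each partition block a singleton), M_{d,P,k} = N\binom{K-1}{t-1} - (N^*-1)\binom{K-2}{t-1} for every user k and demand vector d with N^* distinct demanded files, where 1 \le t \le K-1. -/

import Mathlib

/-!
Write `a = d k`. After exchanging the two sums in `ΔM`, the inner sum for a fixed second
leader `n ≠ a` counts the `(t+1)`-subsets of the `K` users that contain a distinguished user of
class `a` and one of class `n`: shifting the class profile `v` down by `e_a + e_n` turns it into
the multivariate Vandermonde identity for the multiplicities `m - e_a - e_n`, giving
`C(K-2, t-1)` when class `n` is demanded and `0` otherwise. There are `N* - 1` such `n`.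
-/

open Finset Polynomial

section
variable {ι : Type*} [Fintype ι] [DecidableEq ι]

theorem sum_prod_choose_eq_choose_sum (m : ι → ℕ) (c : ℕ) :
    ∑ v ∈ (Fintype.piFinset fun i => range (m i + 1)).filter (fun v => ∑ i, v i = c),
      ∏ i, (m i).choose (v i) = (∑ i, m i).choose c := by
  have hpow : ∀ i, (X + 1 : ℕ[X]) ^ m i = ∑ j ∈ range (m i + 1), C ((m i).choose j) * X ^ j := by
    intro i
    rw [add_pow]
    simp [mul_comm]
  have hcoeff : ∀ v : ι → ℕ, (∏ i, C ((m i).choose (v i)) * X ^ v i).coeff c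
      = if ∑ i, v i = c then ∏ i, (m i).choose (v i) else 0 := by
    intro v
    rw [prod_mul_distrib, ← map_prod, prod_pow_eq_pow_sum, coeff_C_mul, coeff_X_pow]
    simp [eq_comm]
  rw [← Nat.cast_id ((∑ i, m i).choose c), ← coeff_X_add_one_pow ℕ, ← prod_pow_eq_pow_sum,
    Fintype.prod_congr _ _ hpow, prod_univ_sum, finsetSum_coeff, sum_filter]
  exact sum_congr rfl fun v _ => (hcoeff v).symm

theorem sum_prod_choose_tsub_eq_choose_tsub (m e : ι → ℕ) (he : e ≤ m) (c : ℕ) :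
    ∑ v ∈ (Fintype.piFinset fun i => range (m i + 1)).filter
        (fun v => ∑ i, v i = c + ∑ i, e i ∧ ∀ i, e i ≤ v i),
      ∏ i, (m i - e i).choose (v i - e i) = (∑ i, m i - ∑ i, e i).choose c := by
  rw [← sum_tsub_distrib _ fun i _ => he i, ← sum_prod_choose_eq_choose_sum]
  refine sum_nbij' (· - e) (· + e) ?_ ?_ ?_ ?_ fun _ _ => rfl
  · intro v hv
    simp only [mem_filter, Fintype.mem_piFinset, mem_range] at hv ⊢
    obtain ⟨hvm, hsum, hev⟩ := hv
    refine ⟨fun i => ?_, ?_⟩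
    · have := hvm i; simp only [Pi.sub_apply]; omega
    · simp only [Pi.sub_apply]
      rw [sum_tsub_distrib _ fun i _ => hev i]; omega
  · intro w hw
    simp only [mem_filter, Fintype.mem_piFinset, mem_range] at hw ⊢
    obtain ⟨hwm, hsum⟩ := hw
    refine ⟨fun i => ?_, ?_, fun i => ?_⟩
    · have := hwm i; have : e i ≤ m i := he i; simp only [Pi.add_apply]; omega
    · simp only [Pi.add_apply, sum_add_distrib, hsum]
    · simp
  · intro v hv
    simp only [mem_filter] at hv
    exact tsub_add_cancel_of_le hv.2.2
  · intro w _
    exact add_tsub_cancel_right w e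

theorem prod_choose_tsub_pair_eq (m v : ι → ℕ) {a b : ι} (hab : a ≠ b) (ha : 0 < v a)
    (hb : 0 < v b) :
    ∏ i, (m i - (Pi.single a 1 + Pi.single b 1 : ι → ℕ) i).choose
        (v i - (Pi.single a 1 + Pi.single b 1 : ι → ℕ) i)
      = (m a - 1).choose (v a - 1) * (m b - 1).choose (v b - 1) *
          ∏ i ∈ ((univ.filter fun i => v i ≠ 0).erase a).erase b, (m i).choose (v i) := by
  set e : ι → ℕ := Pi.single a 1 + Pi.single b 1
  have hsupp : ∏ i, (m i - e i).choose (v i - e i)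
      = ∏ i ∈ univ.filter fun i => v i ≠ 0, (m i - e i).choose (v i - e i) := by
    refine (prod_subset (subset_univ _) fun i _ hi => ?_).symm
    simp_all
  have hrest : ∀ i ∈ ((univ.filter fun i => v i ≠ 0).erase a).erase b,
      (m i - e i).choose (v i - e i) = (m i).choose (v i) := by
    intro i hi
    obtain ⟨hib, hia, -⟩ := by simpa using hi
    simp [e, hia, hib]
  rw [hsupp, ← mul_prod_erase _ _ (by simpa using ha.ne'),
    ← mul_prod_erase _ _ (mem_erase.mpr ⟨hab.symm, by simpa using hb.ne'⟩),
    prod_congr rfl hrest, ← mul_assoc]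
  simp [e, hab, hab.symm]

theorem sum_two_leaders_eq_choose (m : ι → ℕ) {a b : ι} (hab : a ≠ b) (ha : 0 < m a)
    (hb : 0 < m b) (c : ℕ) :
    ∑ v ∈ (Fintype.piFinset fun i => range (m i + 1)).filter
        (fun v => ∑ i, v i = c + 2 ∧ 0 < v a ∧ 0 < v b),
      (m a - 1).choose (v a - 1) * (m b - 1).choose (v b - 1) *
        ∏ i ∈ ((univ.filter fun i => v i ≠ 0).erase a).erase b, (m i).choose (v i)
      = (∑ i, m i - 2).choose c := by
  set e : ι → ℕ := Pi.single a 1 + Pi.single b 1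
  have he_sum : ∑ i, e i = 2 := by simp [e, sum_add_distrib]
  have he_le : ∀ {v : ι → ℕ}, (∀ i, e i ≤ v i) ↔ 0 < v a ∧ 0 < v b := by
    intro v
    constructor
    · intro h
      exact ⟨(by simpa [e, hab] using h a : 1 ≤ v a),
        (by simpa [e, hab.symm] using h b : 1 ≤ v b)⟩
    · rintro ⟨hva, hvb⟩ i
      rcases eq_or_ne i a with rfl | hia
      · simpa [e, hab] using Nat.one_le_iff_ne_zero.mpr hva.ne'
      rcases eq_or_ne i b with rfl | hib
      · simpa [e, hia] using Nat.one_le_iff_ne_zero.mpr hvb.ne'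
      · simp [e, hia, hib]
  rw [← he_sum, ← sum_prod_choose_tsub_eq_choose_tsub m e (fun _ => he_le.mpr ⟨ha, hb⟩ _) c]
  refine sum_congr (filter_congr fun v _ => by rw [he_le]) fun v hv => ?_
  obtain ⟨hva, hvb⟩ := he_le.mp (mem_filter.mp hv).2.2
  exact (prod_choose_tsub_pair_eq m v hab hva hvb).symm

theorem sum_sum_two_leaders_eq (m : ι → ℕ) {a : ι} (ha : 0 < m a) (c : ℕ) :
    ∑ v ∈ (Fintype.piFinset fun i => range (m i + 1)).filter
        (fun v => ∑ i, v i = c + 2 ∧ 0 < v a),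
      ∑ n ∈ (univ.filter fun n => v n ≠ 0).erase a,
        (m a - 1).choose (v a - 1) * (m n - 1).choose (v n - 1) *
          ∏ i ∈ ((univ.filter fun i => v i ≠ 0).erase a).erase n, (m i).choose (v i)
      = (#(univ.filter fun n => 0 < m n) - 1) * (∑ i, m i - 2).choose c := by
  set A := (Fintype.piFinset fun i => range (m i + 1)).filter
    fun v => ∑ i, v i = c + 2 ∧ 0 < v a
  have hleader : ∀ n ∈ univ.erase a,
      ∑ v ∈ A.filter fun v => v n ≠ 0,
        (m a - 1).choose (v a - 1) * (m n - 1).choose (v n - 1) *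
          ∏ i ∈ ((univ.filter fun i => v i ≠ 0).erase a).erase n, (m i).choose (v i)
      = if 0 < m n then (∑ i, m i - 2).choose c else 0 := by
    intro n hn
    rw [filter_filter]
    split_ifs with hmn
    · rw [← sum_two_leaders_eq_choose m (ne_of_mem_erase hn).symm ha hmn c]
      refine sum_congr (filter_congr fun v _ => ?_) fun _ _ => rfl
      rw [and_assoc, Nat.pos_iff_ne_zero (n := v n)]
    · refine sum_eq_zero fun v hv => absurd ?_ (mem_filter.mp hv).2.2
      have := mem_range.mp (Fintype.mem_piFinset.mp (mem_filter.mp hv).1 n)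
      omega
  rw [sum_comm' (t' := univ.erase a) (s' := fun n => A.filter fun v => v n ≠ 0)
      (fun v n => by simp only [mem_filter, mem_erase, mem_univ]; tauto),
    sum_congr rfl hleader, ← sum_filter, sum_const, smul_eq_mul, filter_erase,
    card_erase_of_mem (by simpa using ha)]
end

theorem memory_full_decomposition_general {N K t : ℕ} (d : Fin K → Fin N) (k : Fin K)
    (m : Fin N → ℕ)
    (hm : ∀ n, m n = (Finset.univ.filter (fun i => d i = n)).card)
    (hmK : ∑ n, m n = K)
    (ht1 : 1 ≤ t)
    (ΔM : ℕ)
    (hΔM : ΔM = ∑ v ∈ (Fintype.piFinset fun n => Finset.range (m n + 1)).filter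
        (fun v => (∑ n, v n = t + 1) ∧ 0 < v (d k)),
      ∑ n ∈ (Finset.univ.filter (fun n => v n ≠ 0)).erase (d k),
        (m (d k) - 1).choose (v (d k) - 1) * ((m n - 1).choose (v n - 1)) *
          ∏ n' ∈ ((Finset.univ.filter (fun n' => v n' ≠ 0)).erase (d k)).erase n,
            (m n').choose (v n')) :
    (N : ℤ) * (K - 1).choose (t - 1) - ΔM
      = (N : ℤ) * (K - 1).choose (t - 1)
        - (((Finset.univ.filter (fun n => 0 < m n)).card : ℤ) - 1)
          * (K - 2).choose (t - 1) := by
  have hmk : 0 < m (d k) := hm (d k) ▸ card_pos.mpr ⟨k, by simp⟩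
  have hdemanded : 1 ≤ #(univ.filter fun n => 0 < m n) := card_pos.mpr ⟨d k, by simpa using hmk⟩
  rw [hΔM, show t + 1 = t - 1 + 2 by omega, sum_sum_two_leaders_eq m hmk, hmK, Nat.cast_mul,
    Nat.cast_sub hdemanded, Nat.cast_one]

/-- For the fully decomposed pattern (each partition block a singleton),
`M_{d,P,k} = N·C(K-1,t-1) - (N*-1)·C(K-2,t-1)` for every user `k` and demand vector
`d` with `N*` distinct demanded files, where `1 ≤ t ≤ K-1`. -/
theorem memory_full_decomposition {N K t : ℕ} (d : Fin K → Fin N) (k : Fin K)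
    (m : Fin N → ℕ)
    (hm : ∀ n, m n = (Finset.univ.filter (fun i => d i = n)).card)
    (hmK : ∑ n, m n = K)
    (ht1 : 1 ≤ t) (ht2 : t < K)
    (ΔM : ℕ)
    (hΔM : ΔM = ∑ v ∈ (Fintype.piFinset fun n => Finset.range (m n + 1)).filter
        (fun v => (∑ n, v n = t + 1) ∧ 0 < v (d k)),
      ∑ n ∈ (Finset.univ.filter (fun n => v n ≠ 0)).erase (d k),
        (m (d k) - 1).choose (v (d k) - 1) * ((m n - 1).choose (v n - 1)) *
          ∏ n' ∈ ((Finset.univ.filter (fun n' => v n' ≠ 0)).erase (d k)).erase n,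
            (m n').choose (v n')) :
    (N : ℤ) * (K - 1).choose (t - 1) - ΔM
      = (N : ℤ) * (K - 1).choose (t - 1)
        - (((Finset.univ.filter (fun n => 0 < m n)).card : ℤ) - 1)
          * (K - 2).choose (t - 1) :=
  memory_full_decomposition_general d k m hm hmK ht1 ΔM hΔM
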